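/- arXiv:1604.08040 — 4 statements merged into one kernel-verified Lean document; each statement's English description precedes it below -/
import Mathlib

section
/- Let S be a set of flat clauses and let S' be the set of ground clauses obtained from the set S* of all DC-instances of clauses of S by deleting every clause containing a literal d = d (d a domain constant), deleting from the remaining clauses every literal d_1 = d_2 with d_1, d_2 distinct domain constants, and adding all functionality definitions and all totality definitions. Then (i) every literal occurring in S' is a principal literal, and (ii) S is n-satisfiable if and only if S', viewed as a propositional clause set whose propositional variables are the principal atoms, is propositionally satisfiable. -/
/-! A structure on `DC = Fin n` and a propositional valuation of the principal atoms satisfying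
the functionality and totality definitions are the same thing: `p(d)` is true iff `p` holds of
`d`, and `f(d) = e` is true iff `f` maps `d` to `e`, the two kinds of definitions saying exactly
that this relation is the graph of a function. Under this correspondence a principal literal is
propositionally true iff it holds in the `DC`-expansion of the structure. A `DC`-instance of a
flat clause consists of principal literals and equalities `d₁ = d₂` between domain constants,
which hold iff `d₁` and `d₂` coincide; so the instance holds iff it is tautological or its
pruned form is propositionally true. Finally, every `n`-element model is isomorphic to one on
`DC`. -/

namespace FMF

/-- A (single-sorted) first-order language: function symbols and predicate
symbols, each with an arity. -/
structure Lang : Type 1 where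
  Func : Type
  funAr : Func → ℕ
  Pred : Type
  predAr : Pred → ℕ

/-- First-order terms of a language `L` with variables drawn from `V`. -/
inductive Term (L : Lang) (V : Type) : Type where
  | var : V → Term L V
  | app : (f : L.Func) → (Fin (L.funAr f) → Term L V) → Term L V

/-- A structure (interpretation) for the language `L` with universe `M`. -/
structure Struc (L : Lang) (M : Type) : Type where
  funM : (f : L.Func) → (Fin (L.funAr f) → M) → M
  predM : (p : L.Pred) → (Fin (L.predAr p) → M) → Prop

/-- Evaluation of a term in a structure under a variable assignment. -/
def Term.eval {L : Lang} {V M : Type} (S : Struc L M) (v : V → M) : Term L V → M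
  | .var x => v x
  | .app f ts => S.funM f (fun i => (ts i).eval S v)

/-- Literals: (possibly negated) predicate atoms and (possibly negated) equalities. -/
inductive Literal (L : Lang) (V : Type) : Type where
  | pos (p : L.Pred) (ts : Fin (L.predAr p) → Term L V)
  | neg (p : L.Pred) (ts : Fin (L.predAr p) → Term L V)
  | eq (t s : Term L V)
  | ne (t s : Term L V)

/-- Truth of a literal in a structure under a variable assignment. -/
def Literal.holdsUnder {L : Lang} {V M : Type} (S : Struc L M) (v : V → M) :
    Literal L V → Prop
  | .pos p ts => S.predM p (fun i => (ts i).eval S v)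
  | .neg p ts => ¬ S.predM p (fun i => (ts i).eval S v)
  | .eq t s => t.eval S v = s.eval S v
  | .ne t s => t.eval S v ≠ s.eval S v

/-- A clause is a disjunction of literals (represented as a list). -/
abbrev Clause (L : Lang) (V : Type) := List (Literal L V)

/-- Truth of a clause (as a disjunction) under a single variable assignment. -/
def Clause.trueUnder {L : Lang} {V M : Type} (S : Struc L M) (v : V → M)
    (C : Clause L V) : Prop :=
  ∃ l ∈ C, l.holdsUnder S v

/-- Truth of a clause in a structure: all variables are implicitly universally
quantified. -/
def Clause.holds {L : Lang} {V M : Type} (S : Struc L M) (C : Clause L V) : Prop :=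
  ∀ v : V → M, C.trueUnder S v

/-- The language `L' = L ∪ DC` obtained from `L` by adding `n` fresh domain
constants `c_1, …, c_n`. -/
def Lang.withConsts (L : Lang) (n : ℕ) : Lang where
  Func := L.Func ⊕ Fin n
  funAr := Sum.elim L.funAr (fun _ => 0)
  Pred := L.Pred
  predAr := L.predAr

/-- The ground term consisting of the `i`-th domain constant. -/
def dcTerm {L : Lang} {n : ℕ} {V : Type} (i : Fin n) : Term (L.withConsts n) V :=
  .app (Sum.inr i) (fun j => j.elim0)

/-- A `DC`-interpretation: a structure for `L ∪ DC` whose universe is the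
`n`-element set `DC` (identified with `Fin n`) interpreting every domain
constant as itself. -/
structure DCInterp (L : Lang) (n : ℕ) : Type where
  S : Struc (L.withConsts n) (Fin n)
  dc_self : ∀ (i : Fin n) (e : Fin 0 → Fin n), S.funM (Sum.inr i) e = i

/-- The reduct of an `L ∪ DC`-structure to the language `L`. -/
def Struc.reduct {L : Lang} {n : ℕ} {M : Type} (S : Struc (L.withConsts n) M) :
    Struc L M where
  funM f := S.funM (Sum.inl f)
  predM p := S.predM p

/-- Lift an `L`-term to an `L ∪ DC`-term. -/
def Term.lift {L : Lang} {n : ℕ} {V : Type} : Term L V → Term (L.withConsts n) V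
  | .var x => .var x
  | .app f ts => .app (Sum.inl f) (fun i => (ts i).lift)

/-- Substituting domain constants for all variables of a term. -/
def Term.substDC {L : Lang} {n : ℕ} {V : Type} (σ : V → Fin n) :
    Term (L.withConsts n) V → Term (L.withConsts n) Empty
  | .var x => dcTerm (σ x)
  | .app f ts => .app f (fun i => (ts i).substDC σ)

/-- Lift an `L`-literal to an `L ∪ DC`-literal. -/
def Literal.lift {L : Lang} {n : ℕ} {V : Type} : Literal L V → Literal (L.withConsts n) V
  | .pos p ts => .pos p (fun i => (ts i).lift)
  | .neg p ts => .neg p (fun i => (ts i).lift)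
  | .eq t s => .eq t.lift s.lift
  | .ne t s => .ne t.lift s.lift

/-- Substituting domain constants for all variables of a literal. -/
def Literal.substDC {L : Lang} {n : ℕ} {V : Type} (σ : V → Fin n) :
    Literal (L.withConsts n) V → Literal (L.withConsts n) Empty
  | .pos p ts => .pos p (fun i => (ts i).substDC σ)
  | .neg p ts => .neg p (fun i => (ts i).substDC σ)
  | .eq t s => .eq (t.substDC σ) (s.substDC σ)
  | .ne t s => .ne (t.substDC σ) (s.substDC σ)

/-- Substituting domain constants for all variables of an `L ∪ DC`-clause,
yielding a ground clause. -/
def Clause.substDC {L : Lang} {n : ℕ} {V : Type} (σ : V → Fin n)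
    (C : Clause (L.withConsts n) V) : Clause (L.withConsts n) Empty :=
  C.map (Literal.substDC σ)

/-- The `DC`-instance of an `L`-clause determined by the substitution `σ`:
the ground `L ∪ DC`-clause obtained by replacing every variable `x` by the
domain constant `σ x`. -/
def Clause.toDC {L : Lang} {n : ℕ} {V : Type} (σ : V → Fin n) (C : Clause L V) :
    Clause (L.withConsts n) Empty :=
  Clause.substDC σ (C.map Literal.lift)

/-- A principal term `f(d_1,…,d_m)`: a function symbol of `L` applied to
domain constants. -/
def pTerm {L : Lang} {n : ℕ} (f : L.Func) (d : Fin (L.funAr f) → Fin n) :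
    Term (L.withConsts n) Empty :=
  .app (Sum.inl f) (fun i => dcTerm (d i))

/-- The functionality definition `p ≠ d₁ ∨ p ≠ d₂` for the principal term
`p = f(d)` and domain constants `d₁, d₂`. -/
def funcClause {L : Lang} {n : ℕ} (f : L.Func) (d : Fin (L.funAr f) → Fin n)
    (d₁ d₂ : Fin n) : Clause (L.withConsts n) Empty :=
  [.ne (pTerm f d) (dcTerm d₁), .ne (pTerm f d) (dcTerm d₂)]

/-- The totality definition `p = c₁ ∨ … ∨ p = c_n` for the principal term
`p = f(d)`. -/
def totClause {L : Lang} {n : ℕ} (f : L.Func) (d : Fin (L.funAr f) → Fin n) :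
    Clause (L.withConsts n) Empty :=
  List.ofFn (fun j : Fin n => Literal.eq (pTerm f d) (dcTerm j))

/-- A principal atom: either `p(d_1,…,d_m)` for a predicate symbol `p` of `L`
and domain constants `d_i`, or `t = d` for a principal term `t` and a domain
constant `d`. -/
def IsPrincipalAtom {L : Lang} {n : ℕ} (A : Literal (L.withConsts n) Empty) : Prop :=
  (∃ (p : L.Pred) (d : Fin (L.predAr p) → Fin n),
      A = Literal.pos (L := L.withConsts n) p (fun i => dcTerm (d i))) ∨
  (∃ (f : L.Func) (d : Fin (L.funAr f) → Fin n) (e : Fin n),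
      A = Literal.eq (pTerm f d) (dcTerm e))

/-- A principal literal: a principal atom or its negation. -/
def IsPrincipalLit {L : Lang} {n : ℕ} (l : Literal (L.withConsts n) Empty) : Prop :=
  (∃ (p : L.Pred) (d : Fin (L.predAr p) → Fin n),
      l = Literal.pos (L := L.withConsts n) p (fun i => dcTerm (d i))) ∨
  (∃ (p : L.Pred) (d : Fin (L.predAr p) → Fin n),
      l = Literal.neg (L := L.withConsts n) p (fun i => dcTerm (d i))) ∨
  (∃ (f : L.Func) (d : Fin (L.funAr f) → Fin n) (e : Fin n),
      l = Literal.eq (pTerm f d) (dcTerm e)) ∨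
  (∃ (f : L.Func) (d : Fin (L.funAr f) → Fin n) (e : Fin n),
      l = Literal.ne (pTerm f d) (dcTerm e))


/-- A family of terms all of which are variables. -/
def IsVarArgs {L : Lang} {V : Type} {m : ℕ} (ts : Fin m → Term L V) : Prop :=
  ∀ i, ∃ x : V, ts i = Term.var x

/-- Flat literals. -/
def IsFlatLit {L : Lang} {V : Type} : Literal L V → Prop
  | .pos _ ts => IsVarArgs ts
  | .neg _ ts => IsVarArgs ts
  | .eq t s =>
      (∃ x y : V, t = Term.var x ∧ s = Term.var y) ∨
      (∃ (f : L.Func) (ts' : Fin (L.funAr f) → Term L V) (y : V),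
        t = Term.app f ts' ∧ IsVarArgs ts' ∧ s = Term.var y)
  | .ne t s =>
      ∃ (f : L.Func) (ts' : Fin (L.funAr f) → Term L V) (y : V),
        t = Term.app f ts' ∧ IsVarArgs ts' ∧ s = Term.var y

/-- A clause containing a tautological literal `d = d` for a domain constant `d`. -/
def containsTaut {L : Lang} {n : ℕ} (D : Clause (L.withConsts n) Empty) : Prop :=
  ∃ d : Fin n, Literal.eq (dcTerm d) (dcTerm d) ∈ D

/-- A literal which is an equality between two distinct domain constants. -/
def isDCEqLit {L : Lang} {n : ℕ} (l : Literal (L.withConsts n) Empty) : Prop :=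
  ∃ d₁ d₂ : Fin n, d₁ ≠ d₂ ∧ l = Literal.eq (dcTerm d₁) (dcTerm d₂)

open Classical in
/-- The clause obtained by deleting every literal `d₁ = d₂` with `d₁, d₂`
distinct domain constants. -/
noncomputable def pruneClause {L : Lang} {n : ℕ} (D : Clause (L.withConsts n) Empty) :
    Clause (L.withConsts n) Empty :=
  D.filter (fun l => decide (¬ isDCEqLit l))

/-- The clause set `S'`: the `DC`-instances of clauses of `S` with tautological
clauses deleted and equalities between distinct domain constants removed,
together with all functionality and totality definitions. -/
def Sprime (L : Lang) (V : Type) (n : ℕ) (SS : Set (Clause L V)) :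
    Set (Clause (L.withConsts n) Empty) :=
  {D' | ∃ C ∈ SS, ∃ σ : V → Fin n,
      ¬ containsTaut (Clause.toDC σ C) ∧ D' = pruneClause (Clause.toDC σ C)} ∪
  {D' | ∃ (f : L.Func) (d : Fin (L.funAr f) → Fin n) (d₁ d₂ : Fin n),
      d₁ ≠ d₂ ∧ D' = funcClause f d d₁ d₂} ∪
  {D' | ∃ (f : L.Func) (d : Fin (L.funAr f) → Fin n), D' = totClause f d}

/-- Propositional truth of a principal literal under a propositional valuation
of the principal atoms: `vP` assigns a truth value to every atom
`p(d_1,…,d_m)`, and `vE` assigns a truth value to every atom `f(d_1,…,d_m) = e`. -/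
def LitPropTrue {L : Lang} {n : ℕ}
    (vP : (p : L.Pred) → (Fin (L.predAr p) → Fin n) → Prop)
    (vE : (f : L.Func) → (Fin (L.funAr f) → Fin n) → Fin n → Prop) :
    Literal (L.withConsts n) Empty → Prop
  | .pos p ts => ∃ d : Fin (L.predAr p) → Fin n,
      ts = (fun i => dcTerm (d i)) ∧ vP p d
  | .neg p ts => ∃ d : Fin (L.predAr p) → Fin n,
      ts = (fun i => dcTerm (d i)) ∧ ¬ vP p d
  | .eq t s => ∃ (f : L.Func) (d : Fin (L.funAr f) → Fin n) (e : Fin n),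
      t = pTerm f d ∧ s = dcTerm e ∧ vE f d e
  | .ne t s => ∃ (f : L.Func) (d : Fin (L.funAr f) → Fin n) (e : Fin n),
      t = pTerm f d ∧ s = dcTerm e ∧ ¬ vE f d e

section Semantics

variable {L : Lang} {n : ℕ}

def Struc.withDC (S : Struc L (Fin n)) : Struc (L.withConsts n) (Fin n) where
  funM
    | .inl f => S.funM f
    | .inr i => fun _ => i
  predM := S.predM

/-- The valuation of the equational principal atoms `f(d) = e` induced by a structure. -/
def Struc.funGraph {M : Type} (S : Struc L M) (f : L.Func) (d : Fin (L.funAr f) → M) (e : M) :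
    Prop :=
  S.funM f d = e

variable (S : Struc L (Fin n)) {V : Type}

@[simp]
lemma withDC_predM : S.withDC.predM = S.predM := rfl

@[simp]
lemma eval_withDC_dcTerm (v : V → Fin n) (i : Fin n) : (dcTerm i).eval S.withDC v = i := rfl

@[simp]
lemma eval_withDC_pTerm (v : Empty → Fin n) (f : L.Func) (d : Fin (L.funAr f) → Fin n) :
    (pTerm f d).eval S.withDC v = S.funM f d := rfl

lemma eval_substDC_lift (σ : V → Fin n) (v : Empty → Fin n) (t : Term L V) :
    (t.lift.substDC σ).eval S.withDC v = t.eval S σ := by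
  induction t with
  | var x => rfl
  | app f ts ih => exact congrArg (S.funM f) (funext ih)

lemma holdsUnder_substDC_lift (σ : V → Fin n) (v : Empty → Fin n) (l : Literal L V) :
    (l.lift.substDC σ).holdsUnder S.withDC v ↔ l.holdsUnder S σ := by
  cases l <;>
    simp only [Literal.lift, Literal.substDC, Literal.holdsUnder, eval_substDC_lift] <;> rfl

lemma trueUnder_toDC (σ : V → Fin n) (v : Empty → Fin n) (C : Clause L V) :
    (C.toDC σ).trueUnder S.withDC v ↔ C.trueUnder S σ := by
  simp [Clause.toDC, Clause.substDC, Clause.trueUnder, holdsUnder_substDC_lift]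

end Semantics

section Transport

variable {L : Lang} {V M N : Type}

def Struc.transport (e : M ≃ N) (S : Struc L M) : Struc L N where
  funM f d := e (S.funM f (e.symm ∘ d))
  predM p d := S.predM p (e.symm ∘ d)

lemma eval_transport (e : M ≃ N) (S : Struc L M) (v : V → M) (t : Term L V) :
    t.eval (S.transport e) (e ∘ v) = e (t.eval S v) := by
  induction t with
  | var x => rfl
  | app f ts ih =>
    exact congrArg (fun d => e (S.funM f d))
      (funext fun i => by rw [Function.comp_apply, ih, Equiv.symm_apply_apply])

lemma holdsUnder_transport (e : M ≃ N) (S : Struc L M) (v : V → M) (l : Literal L V) :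
    l.holdsUnder (S.transport e) (e ∘ v) ↔ l.holdsUnder S v := by
  cases l <;> simp only [Literal.holdsUnder, eval_transport, e.apply_eq_iff_eq] <;>
    simp [Struc.transport, Function.comp_def]

lemma holds_transport (e : M ≃ N) (S : Struc L M) (C : Clause L V) :
    C.holds (S.transport e) ↔ C.holds S := by
  refine ⟨fun h v => ?_, fun h w => ?_⟩
  · simpa [Clause.trueUnder, holdsUnder_transport] using h (e ∘ v)
  · obtain ⟨l, hl, hlw⟩ := h (e.symm ∘ w)
    refine ⟨l, hl, ?_⟩
    rwa [← holdsUnder_transport e, ← Function.comp_assoc, e.self_comp_symm,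
      Function.id_comp] at hlw

end Transport

section Principal

variable {L : Lang} {n : ℕ}

lemma dcTerm_injective {V : Type} : Function.Injective (dcTerm (L := L) (n := n) (V := V)) := by
  intro i j h
  injection h with h
  exact Sum.inr_injective h

lemma pTerm_ne_dcTerm (f : L.Func) (d : Fin (L.funAr f) → Fin n) (e : Fin n) :
    pTerm f d ≠ dcTerm e := by
  intro h
  injection h with h
  exact Sum.inl_ne_inr h

lemma dcTerm_comp_inj {m : ℕ} {d d' : Fin m → Fin n} :
    (fun i => dcTerm (L := L) (V := Empty) (d i)) = (fun i => dcTerm (d' i)) ↔ d = d' :=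
  ⟨fun h => funext fun i => dcTerm_injective (congrFun h i), fun h => h ▸ rfl⟩

lemma exists_pTerm_eq_and_iff {f : L.Func} {d : Fin (L.funAr f) → Fin n}
    {P : (g : L.Func) → (Fin (L.funAr g) → Fin n) → Prop} :
    (∃ g d', pTerm f d = pTerm g d' ∧ P g d') ↔ P f d := by
  refine ⟨?_, fun h => ⟨f, d, rfl, h⟩⟩
  rintro ⟨g, d', h, hP⟩
  injection h with hf hd
  obtain rfl := Sum.inl_injective hf
  obtain rfl := dcTerm_comp_inj.1 (eq_of_heq hd)
  exact hP

variable (vP : (p : L.Pred) → (Fin (L.predAr p) → Fin n) → Prop)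
  (vE : (f : L.Func) → (Fin (L.funAr f) → Fin n) → Fin n → Prop)

@[simp]
lemma litPropTrue_pos (p : L.Pred) (d : Fin (L.predAr p) → Fin n) :
    LitPropTrue vP vE (.pos p fun i => dcTerm (d i)) ↔ vP p d := by
  refine ⟨fun ⟨d', hd, h⟩ => ?_, fun h => ⟨d, rfl, h⟩⟩
  rwa [dcTerm_comp_inj.1 hd]

@[simp]
lemma litPropTrue_neg (p : L.Pred) (d : Fin (L.predAr p) → Fin n) :
    LitPropTrue vP vE (.neg p fun i => dcTerm (d i)) ↔ ¬ vP p d := by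
  refine ⟨fun ⟨d', hd, h⟩ => ?_, fun h => ⟨d, rfl, h⟩⟩
  rwa [dcTerm_comp_inj.1 hd]

@[simp]
lemma litPropTrue_eq (f : L.Func) (d : Fin (L.funAr f) → Fin n) (e : Fin n) :
    LitPropTrue vP vE (.eq (pTerm f d) (dcTerm e)) ↔ vE f d e := by
  simp only [LitPropTrue, dcTerm_injective.eq_iff, exists_and_left, exists_eq_left']
  exact exists_pTerm_eq_and_iff

@[simp]
lemma litPropTrue_ne (f : L.Func) (d : Fin (L.funAr f) → Fin n) (e : Fin n) :
    LitPropTrue vP vE (.ne (pTerm f d) (dcTerm e)) ↔ ¬ vE f d e := by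
  simp only [LitPropTrue, dcTerm_injective.eq_iff, exists_and_left, exists_eq_left']
  exact exists_pTerm_eq_and_iff (P := fun g d' => ¬ vE g d' e)

lemma exists_litPropTrue_funcClause_iff (f : L.Func) (d : Fin (L.funAr f) → Fin n)
    (d₁ d₂ : Fin n) :
    (∃ l ∈ funcClause f d d₁ d₂, LitPropTrue vP vE l) ↔
      ¬ vE f d d₁ ∨ ¬ vE f d d₂ := by
  simp [funcClause]

lemma exists_litPropTrue_totClause_iff (f : L.Func) (d : Fin (L.funAr f) → Fin n) :
    (∃ l ∈ totClause f d, LitPropTrue vP vE l) ↔ ∃ e, vE f d e := by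
  simp [totClause, List.mem_ofFn]

end Principal

section Encoding

variable {L : Lang} {n : ℕ} {V : Type}

lemma mem_pruneClause {D : Clause (L.withConsts n) Empty} {l : Literal (L.withConsts n) Empty} :
    l ∈ pruneClause D ↔ l ∈ D ∧ ¬ isDCEqLit l := by
  simp [pruneClause]

lemma IsPrincipalLit.of_litPropTrue {vP : (p : L.Pred) → (Fin (L.predAr p) → Fin n) → Prop}
    {vE : (f : L.Func) → (Fin (L.funAr f) → Fin n) → Fin n → Prop}
    {l : Literal (L.withConsts n) Empty} (h : LitPropTrue vP vE l) : IsPrincipalLit l := by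
  cases l with
  | pos p ts => obtain ⟨d, rfl, -⟩ := h; exact Or.inl ⟨p, d, rfl⟩
  | neg p ts => obtain ⟨d, rfl, -⟩ := h; exact Or.inr (Or.inl ⟨p, d, rfl⟩)
  | eq t s =>
    obtain ⟨f, d, e, rfl, rfl, -⟩ := h
    exact Or.inr (Or.inr (Or.inl ⟨f, d, e, rfl⟩))
  | ne t s =>
    obtain ⟨f, d, e, rfl, rfl, -⟩ := h
    exact Or.inr (Or.inr (Or.inr ⟨f, d, e, rfl⟩))

lemma IsPrincipalLit.not_isDCEqLit {l : Literal (L.withConsts n) Empty} (hl : IsPrincipalLit l) :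
    ¬ isDCEqLit l := by
  rintro ⟨a, b, -, rfl⟩
  obtain ⟨_, _, ⟨⟩⟩ | ⟨_, _, ⟨⟩⟩ | ⟨f, d, _, h⟩ | ⟨_, _, _, ⟨⟩⟩ := hl
  injection h with h
  exact pTerm_ne_dcTerm f d a h.symm

lemma litPropTrue_funGraph_iff (S : Struc L (Fin n)) (v : Empty → Fin n)
    {l : Literal (L.withConsts n) Empty} (hl : IsPrincipalLit l) :
    LitPropTrue S.predM S.funGraph l ↔ l.holdsUnder S.withDC v := by
  rcases hl with ⟨p, d, rfl⟩ | ⟨p, d, rfl⟩ | ⟨f, d, e, rfl⟩ | ⟨f, d, e, rfl⟩ <;>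
    simp [Literal.holdsUnder, Struc.funGraph]

lemma IsVarArgs.exists_substDC_lift {m : ℕ} {ts : Fin m → Term L V} (h : IsVarArgs ts)
    (σ : V → Fin n) :
    ∃ d : Fin m → Fin n, (fun i => (ts i).lift.substDC σ) = fun i => dcTerm (d i) := by
  choose x hx using h
  exact ⟨σ ∘ x, funext fun i => by rw [hx i]; rfl⟩

lemma IsFlatLit.isPrincipalLit_or_dcEq {l : Literal L V} (hl : IsFlatLit l) (σ : V → Fin n) :
    IsPrincipalLit (l.lift.substDC σ) ∨
      ∃ a b : Fin n, l.lift.substDC σ = .eq (dcTerm a) (dcTerm b) := by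
  cases l with
  | pos p ts =>
    obtain ⟨d, hd⟩ := IsVarArgs.exists_substDC_lift (n := n) hl σ
    exact Or.inl (Or.inl ⟨p, d, congrArg _ hd⟩)
  | neg p ts =>
    obtain ⟨d, hd⟩ := IsVarArgs.exists_substDC_lift (n := n) hl σ
    exact Or.inl (Or.inr (Or.inl ⟨p, d, congrArg _ hd⟩))
  | eq t s =>
    rcases hl with ⟨x, y, rfl, rfl⟩ | ⟨f, ts, y, rfl, hts, rfl⟩
    · exact Or.inr ⟨σ x, σ y, rfl⟩
    · obtain ⟨d, hd⟩ := hts.exists_substDC_lift (n := n) σ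
      refine Or.inl (Or.inr (Or.inr (Or.inl ⟨f, d, σ y, ?_⟩)))
      exact congrArg (fun ts => Literal.eq (Term.app (Sum.inl f) ts) (dcTerm (σ y))) hd
  | ne t s =>
    obtain ⟨f, ts, y, rfl, hts, rfl⟩ := hl
    obtain ⟨d, hd⟩ := hts.exists_substDC_lift (n := n) σ
    refine Or.inl (Or.inr (Or.inr (Or.inr ⟨f, d, σ y, ?_⟩)))
    exact congrArg (fun ts => Literal.ne (Term.app (Sum.inl f) ts) (dcTerm (σ y))) hd

lemma trueUnder_withDC_iff (S : Struc L (Fin n)) (v : Empty → Fin n)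
    {D : Clause (L.withConsts n) Empty}
    (hD : ∀ l ∈ D, IsPrincipalLit l ∨ ∃ a b : Fin n, l = .eq (dcTerm a) (dcTerm b)) :
    D.trueUnder S.withDC v ↔
      containsTaut D ∨ ∃ l ∈ pruneClause D, LitPropTrue S.predM S.funGraph l := by
  constructor
  · rintro ⟨l, hl, hlv⟩
    rcases hD l hl with hp | ⟨a, b, rfl⟩
    · exact Or.inr ⟨l, mem_pruneClause.2 ⟨hl, hp.not_isDCEqLit⟩,
        (litPropTrue_funGraph_iff S v hp).2 hlv⟩
    · obtain rfl : a = b := hlv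
      exact Or.inl ⟨a, hl⟩
  · rintro (⟨d, hd⟩ | ⟨l, hl, hlt⟩)
    · exact ⟨_, hd, rfl⟩
    · exact ⟨l, (mem_pruneClause.1 hl).1,
        (litPropTrue_funGraph_iff S v (.of_litPropTrue hlt)).1 hlt⟩

lemma isPrincipalLit_or_dcEq_of_mem_toDC {C : Clause L V} (hC : ∀ l ∈ C, IsFlatLit l)
    (σ : V → Fin n) {l : Literal (L.withConsts n) Empty} (hl : l ∈ C.toDC σ) :
    IsPrincipalLit l ∨ ∃ a b : Fin n, l = .eq (dcTerm a) (dcTerm b) := by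
  simp only [Clause.toDC, Clause.substDC, List.map_map, List.mem_map] at hl
  obtain ⟨l₀, hl₀, rfl⟩ := hl
  exact (hC l₀ hl₀).isPrincipalLit_or_dcEq σ

lemma isPrincipalLit_of_mem_pruneClause_toDC {C : Clause L V} (hC : ∀ l ∈ C, IsFlatLit l)
    {σ : V → Fin n} (hσ : ¬ containsTaut (C.toDC σ)) {l : Literal (L.withConsts n) Empty}
    (hl : l ∈ pruneClause (C.toDC σ)) : IsPrincipalLit l := by
  obtain ⟨hl, hne⟩ := mem_pruneClause.1 hl
  obtain h | ⟨a, b, rfl⟩ := isPrincipalLit_or_dcEq_of_mem_toDC hC σ hl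
  · exact h
  · by_cases hab : a = b
    · exact absurd ⟨a, hab ▸ hl⟩ hσ
    · exact absurd ⟨a, b, hab, rfl⟩ hne

lemma isPrincipalLit_of_mem_Sprime {SS : Set (Clause L V)}
    (hflat : ∀ C ∈ SS, ∀ l ∈ C, IsFlatLit l) {D : Clause (L.withConsts n) Empty}
    (hD : D ∈ Sprime L V n SS) {l : Literal (L.withConsts n) Empty} (hl : l ∈ D) :
    IsPrincipalLit l := by
  rcases hD with (⟨C, hC, σ, hσ, rfl⟩ | ⟨f, d, d₁, d₂, -, rfl⟩) | ⟨f, d, rfl⟩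
  · exact isPrincipalLit_of_mem_pruneClause_toDC (hflat C hC) hσ hl
  · simp only [funcClause, List.mem_cons, List.not_mem_nil, or_false] at hl
    rcases hl with rfl | rfl <;> exact Or.inr (Or.inr (Or.inr ⟨f, d, _, rfl⟩))
  · obtain ⟨e, rfl⟩ := List.mem_ofFn.1 hl
    exact Or.inr (Or.inr (Or.inl ⟨f, d, e, rfl⟩))

lemma models_iff_sat_Sprime (S : Struc L (Fin n)) {SS : Set (Clause L V)}
    (hflat : ∀ C ∈ SS, ∀ l ∈ C, IsFlatLit l) :
    (∀ C ∈ SS, C.holds S) ↔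
      ∀ D ∈ Sprime L V n SS, ∃ l ∈ D, LitPropTrue S.predM S.funGraph l := by
  have hinst {C σ} (hC : C ∈ SS) := trueUnder_withDC_iff S isEmptyElim
    fun l hl => isPrincipalLit_or_dcEq_of_mem_toDC (hflat C hC) σ hl
  constructor
  · rintro hS D ((⟨C, hC, σ, hσ, rfl⟩ | ⟨f, d, d₁, d₂, hne, rfl⟩) | ⟨f, d, rfl⟩)
    · exact ((hinst hC).1 ((trueUnder_toDC S σ isEmptyElim C).2 (hS C hC σ))).resolve_left hσ
    · rw [exists_litPropTrue_funcClause_iff, Struc.funGraph, Struc.funGraph, ← not_and_or]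
      exact fun h => hne (h.1.symm.trans h.2)
    · exact (exists_litPropTrue_totClause_iff _ _ f d).2 ⟨_, rfl⟩
  · intro h C hC σ
    rw [← trueUnder_toDC S σ isEmptyElim, hinst hC]
    by_cases hσ : containsTaut (C.toDC σ)
    exacts [Or.inl hσ, Or.inr (h _ (Or.inl (Or.inl ⟨C, hC, σ, hσ, rfl⟩)))]

lemma exists_struc_of_sat_Sprime {SS : Set (Clause L V)}
    {vP : (p : L.Pred) → (Fin (L.predAr p) → Fin n) → Prop}
    {vE : (f : L.Func) → (Fin (L.funAr f) → Fin n) → Fin n → Prop}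
    (h : ∀ D ∈ Sprime L V n SS, ∃ l ∈ D, LitPropTrue vP vE l) :
    ∃ S : Struc L (Fin n), S.predM = vP ∧ S.funGraph = vE := by
  have htot (f d) : ∃ e, vE f d e :=
    (exists_litPropTrue_totClause_iff vP vE f d).1 (h _ (Or.inr ⟨f, d, rfl⟩))
  have hfun (f d) (e₁ e₂ : Fin n) (h₁ : vE f d e₁) (h₂ : vE f d e₂) : e₁ = e₂ := by
    by_contra hne
    exact ((exists_litPropTrue_funcClause_iff vP vE f d e₁ e₂).1
      (h _ (Or.inl (Or.inr ⟨f, d, e₁, e₂, hne, rfl⟩)))).elim (· h₁) (· h₂)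
  choose F hF using htot
  refine ⟨⟨F, vP⟩, rfl, funext fun f => funext fun d => funext fun e => ?_⟩
  exact propext ⟨fun he => he ▸ hF f d, hfun f d _ _ (hF f d)⟩

end Encoding

/-- Let `S` be a set of flat clauses and `S'` the clause set
obtained from the set `S*` of all `DC`-instances of clauses of `S` by removing
equalities between domain constants (deleting tautological clauses and pruning
literals between distinct domain constants) and adding all functionality and
totality definitions.  Then (i) every literal occurring in `S'` is principal,
and (ii) `S` is `n`-satisfiable iff `S'` is propositionally satisfiable
(viewing the principal atoms as propositional variables). -/
theorem flat_clauses_sat_encoding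
    (L : Lang) (V : Type) (n : ℕ) (hn : 1 ≤ n) (SS : Set (Clause L V))
    (hflat : ∀ C ∈ SS, ∀ l ∈ C, IsFlatLit l) :
    (∀ D ∈ Sprime L V n SS, ∀ l ∈ D, IsPrincipalLit l) ∧
    ((∃ (M : Type) (S : Struc L M), Nat.card M = n ∧ ∀ C ∈ SS, Clause.holds S C) ↔
      (∃ (vP : (p : L.Pred) → (Fin (L.predAr p) → Fin n) → Prop)
         (vE : (f : L.Func) → (Fin (L.funAr f) → Fin n) → Fin n → Prop),
        ∀ D ∈ Sprime L V n SS, ∃ l ∈ D, LitPropTrue vP vE l)) := by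
  refine ⟨fun D hD l hl => isPrincipalLit_of_mem_Sprime hflat hD hl, ⟨?_, ?_⟩⟩
  · rintro ⟨M, S, hM, hS⟩
    have : Finite M := Nat.finite_of_card_ne_zero (by omega)
    let S' := S.transport (Finite.equivFinOfCardEq hM)
    exact ⟨S'.predM, S'.funGraph,
      (models_iff_sat_Sprime S' hflat).1 fun C hC => (holds_transport _ S C).2 (hS C hC)⟩
  · rintro ⟨vP, vE, h⟩
    obtain ⟨S, rfl, rfl⟩ := exists_struc_of_sat_Sprime h
    exact ⟨Fin n, S, Nat.card_fin n, (models_iff_sat_Sprime S hflat).2 h⟩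

end FMF
end

section
/- A set S of L-clauses has a model whose universe has cardinality n if and only if S has a DC-model. -/
namespace FMF

/-!
Truth of clauses is invariant under isomorphism, so a model of size `n` can be
carried along a bijection onto `DC` and then expanded by interpreting each `c_i`
as itself; conversely, the reduct of a `DC`-model is a model of size `n`.
-/

@[simps]
def Struc.map {L : Lang} {M N : Type} (e : M ≃ N) (S : Struc L M) : Struc L N where
  funM f args := e (S.funM f (e.symm ∘ args))
  predM p args := S.predM p (e.symm ∘ args)

theorem Term.eval_map {L : Lang} {V M N : Type} (e : M ≃ N) (S : Struc L M) (v : V → N)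
    (t : Term L V) : t.eval (S.map e) v = e (t.eval S (e.symm ∘ v)) := by
  induction t with
  | var x => simp [Term.eval]
  | app f ts ih =>
    simp only [Term.eval, ih, Struc.map_funM, Function.comp_def, Equiv.symm_apply_apply]

theorem Literal.holdsUnder_map {L : Lang} {V M N : Type} (e : M ≃ N) (S : Struc L M)
    (v : V → N) (l : Literal L V) :
    l.holdsUnder (S.map e) v ↔ l.holdsUnder S (e.symm ∘ v) := by
  cases l with
  | pos p ts | neg p ts =>
    simp only [Literal.holdsUnder, Term.eval_map, Struc.map_predM, Function.comp_def,
      Equiv.symm_apply_apply]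
  | eq t s | ne t s =>
    simp only [Literal.holdsUnder, Term.eval_map, ne_eq, e.apply_eq_iff_eq]

theorem Clause.holds_map_iff {L : Lang} {V M N : Type} (e : M ≃ N) (S : Struc L M)
    (C : Clause L V) : C.holds (S.map e) ↔ C.holds S := by
  simp only [Clause.holds, Clause.trueUnder, Literal.holdsUnder_map]
  exact (e.symm.surjective.comp_left.forall
    (p := fun w : V → M => ∃ l ∈ C, l.holdsUnder S w)).symm

def Struc.expand {L : Lang} {n : ℕ} {M : Type} (S : Struc L M) (c : Fin n → M) :
    Struc (L.withConsts n) M where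
  funM
    | .inl f => S.funM f
    | .inr i => fun _ => c i
  predM := S.predM

def DCInterp.ofStruc {L : Lang} {n : ℕ} (S : Struc L (Fin n)) : DCInterp L n where
  S := S.expand id
  dc_self _ _ := rfl

/-- A set `S` of `L`-clauses has a model whose universe has
cardinality `n` if and only if `S` has a `DC`-model. -/
theorem n_satisfiable_iff_has_dc_model
    (L : Lang) (V : Type) (n : ℕ) (hn : 1 ≤ n) (SS : Set (Clause L V)) :
    (∃ (M : Type) (S : Struc L M), Nat.card M = n ∧ ∀ C ∈ SS, Clause.holds S C) ↔
      (∃ I : DCInterp L n, ∀ C ∈ SS, Clause.holds I.S.reduct C) := by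
  constructor
  · rintro ⟨M, S, hcard, hS⟩
    -- `Nat.card M = n ≥ 1` rules out an infinite `M`, whose `Nat.card` is also `0`.
    let e : M ≃ Fin n := hcard ▸ Nat.equivFinOfCardPos (by omega)
    exact ⟨DCInterp.ofStruc (S.map e), fun C hC => (Clause.holds_map_iff e S C).mpr (hS C hC)⟩
  · rintro ⟨I, hI⟩
    exact ⟨Fin n, I.S.reduct, Nat.card_fin n, hI⟩

end FMF
end

section
/- Let M be an L-structure and let φ(x, y) and ψ(y, z) be quantifier-free L-formulas. Then M satisfies ∀x ∀y ∀z (φ(x, y) ∨ ψ(y, z)) if and only if there is an expansion M' of M to the language L ∪ {s}, where s is a fresh unary predicate symbol, such that M' satisfies both ∀x ∀y (φ(x, y) ∨ s(y)) and ∀y ∀z (¬s(y) ∨ ψ(y, z)). Consequently, clause splitting preserves satisfiability. -/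
open FirstOrder FirstOrder.Language

/-- The language consisting of a single unary predicate symbol `s`. -/
def sLang : FirstOrder.Language where
  Functions := fun _ => Empty
  Relations := fun n => match n with
    | 1 => Unit
    | _ => Empty

/-- The unary predicate symbol `s` of `sLang`. -/
def sSym : sLang.Relations 1 := ()

/-! Splitting `∀x y z, A(x,y) ∨ B(y,z)` at the shared variable `y` is sound because a
predicate `s` can be chosen as "`A(x, y)` fails for some `x`": where `s y` fails, `A(·, y)`
holds everywhere; where it holds, a failure of `A` at some `x` forces `B(y, ·)` everywhere. -/

theorem forall_or_iff_exists_split {α β γ : Type*} (A : α → β → Prop) (B : β → γ → Prop) :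
    (∀ x y z, A x y ∨ B y z) ↔ ∃ s : β → Prop, (∀ x y, A x y ∨ s y) ∧ (∀ y z, ¬ s y ∨ B y z) := by
  constructor
  · intro h
    refine ⟨fun y => ∃ x, ¬ A x y, fun x y => ?_, fun y z => ?_⟩
    · exact (em (A x y)).imp_right fun hA => ⟨x, hA⟩
    · by_cases hs : ∃ x, ¬ A x y
      · obtain ⟨x, hx⟩ := hs
        exact Or.inr ((h x y z).resolve_left hx)
      · exact Or.inl hs
  · rintro ⟨s, hA, hB⟩ x y z
    exact (hA x y).imp_right fun hs => (hB y z).resolve_left (not_not_intro hs)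

/-- Only arity `1` carries a symbol, where `∀ i, P (x i)` reads `P (x 0)`. -/
abbrev sLangStructure {M : Type*} (P : M → Prop) : Language.Structure sLang M where
  funMap f := Empty.elim f
  RelMap _ x := ∀ i, P (x i)

theorem relMap_sSym_sLangStructure {M : Type*} (P : M → Prop) (y : M) :
    @Structure.RelMap sLang M (sLangStructure P) 1 sSym ![y] ↔ P y := by
  simp [Structure.RelMap]

theorem clause_splitting_general {L : FirstOrder.Language} (M : Type*)
    [inst : L.Structure M] (φ ψ : L.Formula (Fin 2)) :
    (∀ x y z : M, φ.Realize ![x, y] ∨ ψ.Realize ![y, z]) ↔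
      ∃ S' : (L.sum sLang).Structure M,
        @LHom.IsExpansionOn L (L.sum sLang) LHom.sumInl M inst S' ∧
        (∀ x y : M,
          φ.Realize ![x, y] ∨ @Structure.RelMap (L.sum sLang) M S' 1 (Sum.inr sSym) ![y]) ∧
        (∀ y z : M,
          ¬ @Structure.RelMap (L.sum sLang) M S' 1 (Sum.inr sSym) ![y] ∨ ψ.Realize ![y, z]) := by
  rw [forall_or_iff_exists_split]
  constructor
  · rintro ⟨s, hφ, hψ⟩
    let _ := sLangStructure s
    refine ⟨Language.sumStructure L sLang M, inferInstance, ?_, ?_⟩ <;>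
      simpa only [relMap_sumInr, relMap_sSym_sLangStructure]
  · rintro ⟨S', -, hφ, hψ⟩
    exact ⟨_, hφ, hψ⟩

/-- Let `M` be an `L`-structure and `φ(x, y)`, `ψ(y, z)`
quantifier-free `L`-formulas.  Then `M ⊨ ∀x ∀y ∀z (φ(x, y) ∨ ψ(y, z))` iff
there is an expansion `M'` of `M` to the language `L ∪ {s}` (`s` a fresh unary
predicate) satisfying both `∀x ∀y (φ(x, y) ∨ s(y))` and
`∀y ∀z (¬s(y) ∨ ψ(y, z))`.  Consequently, clause splitting preserves
satisfiability. -/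
theorem clause_splitting {L : FirstOrder.Language} (M : Type*)
    [inst : L.Structure M] (φ ψ : L.Formula (Fin 2))
    (hφ : (φ : L.BoundedFormula (Fin 2) 0).IsQF)
    (hψ : (ψ : L.BoundedFormula (Fin 2) 0).IsQF) :
    (∀ x y z : M, φ.Realize ![x, y] ∨ ψ.Realize ![y, z]) ↔
      ∃ S' : (L.sum sLang).Structure M,
        @LHom.IsExpansionOn L (L.sum sLang) LHom.sumInl M inst S' ∧
        (∀ x y : M,
          φ.Realize ![x, y] ∨ @Structure.RelMap (L.sum sLang) M S' 1 (Sum.inr sSym) ![y]) ∧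
        (∀ y z : M,
          ¬ @Structure.RelMap (L.sum sLang) M S' 1 (Sum.inr sSym) ![y] ∨ ψ.Realize ![y, z]) :=
  clause_splitting_general M (inst := inst) φ ψ
end

section
/- Let S be a set of clauses in which no equality atom occurs positively, i.e., every equality literal occurring in a clause of S is a negated equality t ≠ s (predicate literals may occur with either polarity). If S has a model whose universe has finite cardinality n ≥ 1, then S has a model whose universe has cardinality n + 1 (and hence of every finite cardinality ≥ n). -/
namespace FMF

/-!
Given a model `S` on `M` and a retraction `r : M' → M` with section `s`, let `M'` compute through
`r`. Then `r` commutes with term evaluation, so every predicate literal and every disequation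
true at `r ∘ v` in `S` is true at `v` in the new structure; only positive equalities can fail,
because `r` identifies distinct elements. Taking `M' = Option M` with `none ↦ m₀` adds one
element.
-/

def Struc.pullback {L : Lang} {M M' : Type} (S : Struc L M) (r : M' → M) (s : M → M') :
    Struc L M' where
  funM f a := s (S.funM f (r ∘ a))
  predM p a := S.predM p (r ∘ a)

section Pullback

variable {L : Lang} {V M M' : Type} {S : Struc L M} {r : M' → M} {s : M → M'}

theorem Term.eval_pullback (hrs : Function.LeftInverse r s) (t : Term L V) (v : V → M') :
    r (t.eval (S.pullback r s) v) = t.eval S (r ∘ v) := by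
  induction t with
  | var x => rfl
  | app f ts ih =>
    simp only [Term.eval, Struc.pullback, hrs _]
    congr 1
    funext i
    exact ih i

theorem Literal.holdsUnder_pullback (hrs : Function.LeftInverse r s) {l : Literal L V}
    (hl : ∀ t u : Term L V, l ≠ .eq t u) {v : V → M'} (h : l.holdsUnder S (r ∘ v)) :
    l.holdsUnder (S.pullback r s) v := by
  have hargs : ∀ {k : ℕ} (ts : Fin k → Term L V),
      r ∘ (fun i => (ts i).eval (S.pullback r s) v) = fun i => (ts i).eval S (r ∘ v) :=
    fun ts => funext fun i => Term.eval_pullback hrs (ts i) v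
  cases l with
  | pos p ts => show S.predM p (r ∘ _); rwa [hargs]
  | neg p ts => show ¬S.predM p (r ∘ _); rwa [hargs]
  | eq t u => exact absurd rfl (hl t u)
  | ne t u =>
    intro htu
    exact h (by rw [← Term.eval_pullback hrs t v, ← Term.eval_pullback hrs u v, htu])

theorem Clause.holds_pullback (hrs : Function.LeftInverse r s) {C : Clause L V}
    (hC : ∀ l ∈ C, ∀ t u : Term L V, l ≠ .eq t u) (h : C.holds S) :
    C.holds (S.pullback r s) := fun v =>
  let ⟨l, hlC, hl⟩ := h (r ∘ v)
  ⟨l, hlC, Literal.holdsUnder_pullback hrs (hC l hlC) hl⟩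

end Pullback

/-- Let `S` be a set of clauses in which no equality atom
occurs positively.  If `S` has a model whose universe has finite cardinality
`n ≥ 1`, then `S` has a model whose universe has cardinality `n + 1`. -/
theorem monotone_of_no_positive_equality
    (L : Lang) (V : Type) (SS : Set (Clause L V))
    (hnopos : ∀ C ∈ SS, ∀ l ∈ C, ∀ t s : Term L V, l ≠ Literal.eq t s)
    (n : ℕ) (hn : 1 ≤ n)
    (h : ∃ (M : Type) (S : Struc L M), Nat.card M = n ∧ ∀ C ∈ SS, Clause.holds S C) :
    ∃ (M : Type) (S : Struc L M), Nat.card M = n + 1 ∧ ∀ C ∈ SS, Clause.holds S C := by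
  obtain ⟨M, S, hcard, hmod⟩ := h
  have : Finite M := Nat.finite_of_card_ne_zero (by omega)
  obtain ⟨m₀⟩ : Nonempty M := (Nat.card_pos_iff.mp (by omega)).1
  have hrs : Function.LeftInverse (fun x : Option M => x.getD m₀) some := fun _ => rfl
  exact ⟨Option M, S.pullback (·.getD m₀) some, by rw [Finite.card_option, hcard],
    fun C hC => Clause.holds_pullback hrs (hnopos C hC) (hmod C hC)⟩

end FMF
end
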